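/- With D as defined below, if the equation Φ(x) = x has exactly S solutions in [0,1], then min over 0 ≤ x ≤ 1 of D(x) ≤ −1/(4S). -/

import Mathlib

/-!
Write `W x = ∫₀ˣ sign (Φ t - t) φ t dt` and `F` for the set of fixed points of `Φ`. Splitting the
integrals gives `D x = K + W x + |x - Φ x|` with `K = ∫₀¹ sign (Φ t - t) (Φ t - 1) φ t dt`.
If `Φ x < x`, the sign is `-1` between `x` and the next fixed point `q`, so
`W x - W q = q - Φ x ≥ dist (Φ x, F)`; symmetrically if `Φ x > x`. Since `D q = K + W q`, this gives
`min D + dist (Φ x, F) ≤ K + W x` for every `x`. Integrating against `dΦ`, the left side becomes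
`min D + ∫₀¹ dist (u, F) du`, while integration by parts gives `∫₀¹ W dΦ = -K`. Finally
`∫₀¹ dist (u, F) du ≥ 1 / (4 S)`, because `dist (·, F)` dominates `r` minus the sum of the `S`
tents of height and half-width `r = 1 / (2 S)` centred at the points of `F`.
-/

open MeasureTheory intervalIntegral Set Metric Function

lemma integral_tent (p : ℝ) {r : ℝ} (hr : 0 ≤ r) : ∫ u, max (r - |u - p|) 0 = r ^ 2 := by
  have half : ∫ v in Ioi (0 : ℝ), max (r - v) 0 = ∫ v in (0 : ℝ)..r, (r - v) := by
    rw [integral_of_le hr, setIntegral_eq_of_subset_of_forall_sdiff_eq_zero measurableSet_Ioi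
      Ioc_subset_Ioi_self fun v hv => max_eq_right ?_]
    · exact setIntegral_congr_fun measurableSet_Ioc fun v hv => max_eq_left (by linarith [hv.2])
    · linarith [not_le.1 fun h => hv.2 ⟨hv.1, h⟩]
  rw [integral_sub_right_eq_self (fun v => max (r - |v|) 0) p,
    integral_comp_abs (f := fun v => max (r - v) 0), half,
    intervalIntegral.integral_sub intervalIntegrable_const intervalIntegrable_id]
  simp [integral_id]
  ring

lemma integral_tent_le (p : ℝ) {r : ℝ} (hr : 0 ≤ r) :
    ∫ u in (0 : ℝ)..1, max (r - |u - p|) 0 ≤ r ^ 2 := by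
  have hcont : Continuous fun u => max (r - |u - p|) 0 := by fun_prop
  have hsupp : HasCompactSupport fun u => max (r - |u - p|) 0 := by
    refine HasCompactSupport.intro (isCompact_Icc (a := p - r) (b := p + r)) fun u hu => ?_
    refine max_eq_right ?_
    rw [mem_Icc, not_and_or, not_le, not_le] at hu
    rcases hu with hu | hu
    · rw [abs_of_neg (by linarith)]; linarith
    · rw [abs_of_pos (by linarith)]; linarith
  rw [← integral_tent p hr, integral_of_le zero_le_one]
  exact setIntegral_le_integral (hcont.integrable_of_hasCompactSupport hsupp)
    (ae_of_all _ fun _ => le_max_right _ _)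

lemma sub_sum_tent_le_infDist {F : Finset ℝ} (hF : (F : Set ℝ).Nonempty) (r u : ℝ) :
    r - ∑ p ∈ F, max (r - |u - p|) 0 ≤ infDist u (F : Set ℝ) := by
  obtain ⟨p, hpF, hp⟩ := F.finite_toSet.isClosed.exists_infDist_eq_dist hF u
  have := F.single_le_sum (f := fun q => max (r - |u - q|) 0) (fun _ _ => le_max_right _ _) hpF
  rw [hp, Real.dist_eq]
  linarith [le_max_left (r - |u - p|) 0]

lemma one_div_four_mul_ncard_le_integral_infDist {F : Set ℝ} (hF : F.Finite) (hne : F.Nonempty) :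
    1 / (4 * F.ncard) ≤ ∫ u in (0 : ℝ)..1, infDist u F := by
  lift F to Finset ℝ using hF
  have hS : (0 : ℝ) < F.card := by exact_mod_cast Finset.card_pos.2 hne
  set r : ℝ := 1 / (2 * F.card) with hr
  have htent : Continuous fun u => ∑ p ∈ F, max (r - |u - p|) 0 := by fun_prop
  have hsum : ∫ u in (0 : ℝ)..1, ∑ p ∈ F, max (r - |u - p|) 0 ≤ F.card * r ^ 2 := by
    rw [intervalIntegral.integral_finsetSum fun p _ => by
      exact (show Continuous fun u => max (r - |u - p|) 0 by fun_prop).intervalIntegrable _ _]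
    simpa using Finset.sum_le_sum fun p (_ : p ∈ F) => integral_tent_le p (r := r) (by positivity)
  calc 1 / (4 * ((F : Set ℝ).ncard : ℝ)) = r - F.card * r ^ 2 := by
        rw [ncard_coe_finset, hr]; field_simp; ring
    _ ≤ ∫ u in (0 : ℝ)..1, (r - ∑ p ∈ F, max (r - |u - p|) 0) := by
        rw [intervalIntegral.integral_sub intervalIntegrable_const (htent.intervalIntegrable _ _)]
        simp only [intervalIntegral.integral_const, sub_zero, smul_eq_mul, one_mul]
        linarith
    _ ≤ ∫ u in (0 : ℝ)..1, infDist u F :=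
        integral_mono_on zero_le_one (intervalIntegrable_const.sub (htent.intervalIntegrable _ _))
          ((continuous_infDist_pt _).intervalIntegrable _ _)
          fun u _ => sub_sum_tent_le_infDist hne r u

lemma measurable_real_sign : Measurable Real.sign :=
  Measurable.ite measurableSet_Iio measurable_const
    (Measurable.ite measurableSet_Ioi measurable_const measurable_const)

lemma continuousAt_real_sign_of_ne_zero {r : ℝ} (hr : r ≠ 0) : ContinuousAt Real.sign r := by
  rcases hr.lt_or_gt with hr | hr
  · exact continuousAt_const.congr <|
      (eventually_lt_nhds hr).mono fun s hs => (Real.sign_of_neg hs).symm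
  · exact continuousAt_const.congr <|
      (eventually_gt_nhds hr).mono fun s hs => (Real.sign_of_pos hs).symm

lemma IntervalIntegrable.sign_comp_mul {g u : ℝ → ℝ} {a b : ℝ} (hg : Measurable g)
    (hu : IntervalIntegrable u volume a b) :
    IntervalIntegrable (fun t => Real.sign (g t) * u t) volume a b := by
  refine (intervalIntegrable_iff.1 hu).bdd_mul (c := 1)
    (measurable_real_sign.comp hg).aestronglyMeasurable (ae_of_all _ fun t => ?_)
    |> intervalIntegrable_iff.2
  rcases Real.sign_apply_eq (g t) with h | h | h <;> simp [h]

lemma pos_of_pos_of_forall_ne_zero {f : ℝ → ℝ} (hf : Continuous f) {a b : ℝ} (ha : 0 < f a)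
    (h : ∀ s ∈ uIcc a b, f s ≠ 0) : 0 < f b := by
  by_contra! hb
  obtain ⟨s, hs, hfs⟩ := isPreconnected_uIcc.intermediate_value right_mem_uIcc left_mem_uIcc
    hf.continuousOn ⟨hb, ha.le⟩
  exact h s hs hfs

lemma continuous_of_forall_hasDerivAt {f f' : ℝ → ℝ} (h : ∀ x, HasDerivAt f (f' x) x) :
    Continuous f :=
  continuous_iff_continuousAt.2 fun x => (h x).continuousAt

noncomputable def firstVariation (φ Φ : ℝ → ℝ) (x : ℝ) : ℝ :=
  (∫ t in (0 : ℝ)..x, Real.sign (Φ t - t) * Φ t * φ t) +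
    (∫ t in x..(1 : ℝ), Real.sign (Φ t - t) * (Φ t - 1) * φ t) + |x - Φ x|

noncomputable def signedPrimitive (φ Φ : ℝ → ℝ) (x : ℝ) : ℝ :=
  ∫ t in (0 : ℝ)..x, Real.sign (Φ t - t) * φ t

section

variable {φ Φ : ℝ → ℝ}

lemma intervalIntegrable_sign_sub_mul (hΦ : Continuous Φ) {u : ℝ → ℝ} (hu : Continuous u)
    (a b : ℝ) : IntervalIntegrable (fun t => Real.sign (Φ t - t) * u t) volume a b :=
  (hu.intervalIntegrable a b).sign_comp_mul (hΦ.sub continuous_id).measurable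

lemma continuous_signedPrimitive (hφ : Continuous φ) (hΦ : Continuous Φ) :
    Continuous (signedPrimitive φ Φ) :=
  continuous_primitive (intervalIntegrable_sign_sub_mul hΦ hφ) 0

lemma hasDerivAt_signedPrimitive (hφ : Continuous φ) (hΦ : Continuous Φ) {x : ℝ} (hx : Φ x ≠ x) :
    HasDerivAt (signedPrimitive φ Φ) (Real.sign (Φ x - x) * φ x) x :=
  (integral_hasStrictDerivAt_right (intervalIntegrable_sign_sub_mul hΦ hφ 0 x)
    ((measurable_real_sign.comp (hΦ.sub continuous_id).measurable).mul
      hφ.measurable).stronglyMeasurable.stronglyMeasurableAtFilter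
    (((continuousAt_real_sign_of_ne_zero (sub_ne_zero.2 hx)).comp (f := fun t => Φ t - t)
      (by fun_prop)).mul hφ.continuousAt)).hasDerivAt

lemma firstVariation_eq (hφ : Continuous φ) (hΦ : Continuous Φ) (x : ℝ) :
    firstVariation φ Φ x = (∫ t in (0 : ℝ)..1, Real.sign (Φ t - t) * (Φ t - 1) * φ t) +
      signedPrimitive φ Φ x + |x - Φ x| := by
  have hint := intervalIntegrable_sign_sub_mul hΦ (u := fun t => (Φ t - 1) * φ t) (by fun_prop)
  have hsplit : ∫ t in (0 : ℝ)..x, Real.sign (Φ t - t) * (Φ t * φ t) =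
      (∫ t in (0 : ℝ)..x, Real.sign (Φ t - t) * ((Φ t - 1) * φ t)) + signedPrimitive φ Φ x := by
    rw [signedPrimitive, ← intervalIntegral.integral_add (hint 0 x)
      (intervalIntegrable_sign_sub_mul hΦ hφ 0 x)]
    congr 1 with t
    ring
  simp only [firstVariation, mul_assoc]
  rw [hsplit, ← integral_add_adjacent_intervals (hint 0 x) (hint x 1)]
  ring

lemma signedPrimitive_sub_eq_of_sign_eq (hφ : Continuous φ) (hΦ : ∀ x, HasDerivAt Φ (φ x) x)
    {a b : ℝ} (hab : a ≤ b) {s : ℝ} (hs : ∀ t ∈ Ioo a b, Real.sign (Φ t - t) = s) :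
    signedPrimitive φ Φ b - signedPrimitive φ Φ a = s * (Φ b - Φ a) := by
  have hint := intervalIntegrable_sign_sub_mul (continuous_of_forall_hasDerivAt hΦ) hφ
  rw [signedPrimitive, signedPrimitive, integral_interval_sub_left (hint 0 b) (hint 0 a),
    ← integral_eq_sub_of_hasDerivAt (fun x _ => hΦ x) (hφ.intervalIntegrable a b),
    ← intervalIntegral.integral_const_mul, integral_of_le hab, integral_of_le hab,
    integral_Ioc_eq_integral_Ioo, integral_Ioc_eq_integral_Ioo]
  exact setIntegral_congr_fun measurableSet_Ioo fun t ht => by rw [hs t ht]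

lemma exists_fixedPoint_ge_infDist_le (hφ : Continuous φ) (hΦ : ∀ x, HasDerivAt Φ (φ x) x)
    (hfin : (Icc 0 1 ∩ fixedPoints Φ).Finite) (h1 : Φ 1 = 1) {x : ℝ} (hx : x ∈ Icc (0 : ℝ) 1)
    (hlt : Φ x < x) : ∃ q ∈ Icc 0 1 ∩ fixedPoints Φ,
      infDist (Φ x) (Icc 0 1 ∩ fixedPoints Φ) ≤
        signedPrimitive φ Φ x - signedPrimitive φ Φ q := by
  set F := Icc 0 1 ∩ fixedPoints Φ
  have hΦc : Continuous Φ := continuous_of_forall_hasDerivAt hΦ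
  set q := sInf (F ∩ Ici x)
  have hne : (F ∩ Ici x).Nonempty := ⟨1, ⟨⟨right_mem_Icc.2 zero_le_one, h1⟩, hx.2⟩⟩
  obtain ⟨hqF, hxq : x ≤ q⟩ := hne.csInf_mem (hfin.inter_of_left _)
  have hgap : ∀ t ∈ Ioo x q, Real.sign (Φ t - t) = -1 := by
    intro t ht
    refine Real.sign_of_neg (sub_neg.2 (sub_pos.1 ?_))
    refine pos_of_pos_of_forall_ne_zero (f := fun s => s - Φ s) (by fun_prop) (sub_pos.2 hlt)
      fun s hs hs0 => ?_
    rw [uIcc_of_le ht.1.le] at hs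
    have : q ≤ s := csInf_le (hfin.inter_of_left _).bddBelow
      ⟨⟨⟨hx.1.trans hs.1, hs.2.trans (ht.2.le.trans hqF.1.2)⟩, (sub_eq_zero.1 hs0).symm⟩, hs.1⟩
    linarith [ht.2, hs.2]
  refine ⟨q, hqF, ?_⟩
  have hW := signedPrimitive_sub_eq_of_sign_eq hφ hΦ hxq hgap
  have hd := infDist_le_dist_of_mem hqF (x := Φ x)
  rw [Real.dist_eq, abs_of_nonpos (by linarith)] at hd
  rw [hqF.2] at hW
  linarith

lemma exists_fixedPoint_le_infDist_le (hφ : Continuous φ) (hΦ : ∀ x, HasDerivAt Φ (φ x) x)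
    (hfin : (Icc 0 1 ∩ fixedPoints Φ).Finite) (h0 : Φ 0 = 0) {x : ℝ} (hx : x ∈ Icc (0 : ℝ) 1)
    (hgt : x < Φ x) : ∃ p ∈ Icc 0 1 ∩ fixedPoints Φ,
      infDist (Φ x) (Icc 0 1 ∩ fixedPoints Φ) ≤
        signedPrimitive φ Φ x - signedPrimitive φ Φ p := by
  set F := Icc 0 1 ∩ fixedPoints Φ
  have hΦc : Continuous Φ := continuous_of_forall_hasDerivAt hΦ
  set p := sSup (F ∩ Iic x)
  have hne : (F ∩ Iic x).Nonempty := ⟨0, ⟨⟨left_mem_Icc.2 zero_le_one, h0⟩, hx.1⟩⟩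
  obtain ⟨hpF, hpx : p ≤ x⟩ := hne.csSup_mem (hfin.inter_of_left _)
  have hgap : ∀ t ∈ Ioo p x, Real.sign (Φ t - t) = 1 := by
    intro t ht
    refine Real.sign_of_pos ?_
    refine pos_of_pos_of_forall_ne_zero (f := fun s => Φ s - s) (by fun_prop) (sub_pos.2 hgt)
      fun s hs hs0 => ?_
    rw [uIcc_of_ge ht.2.le] at hs
    have : s ≤ p := le_csSup (hfin.inter_of_left _).bddAbove
      ⟨⟨⟨(hpF.1.1.trans ht.1.le).trans hs.1, hs.2.trans hx.2⟩, sub_eq_zero.1 hs0⟩, hs.2⟩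
    linarith [ht.1, hs.1]
  refine ⟨p, hpF, ?_⟩
  have hW := signedPrimitive_sub_eq_of_sign_eq hφ hΦ hpx hgap
  have hd := infDist_le_dist_of_mem hpF (x := Φ x)
  rw [Real.dist_eq, abs_of_nonneg (by linarith)] at hd
  rw [hpF.2] at hW
  linarith

lemma exists_fixedPoint_infDist_le (hφ : Continuous φ) (hΦ : ∀ x, HasDerivAt Φ (φ x) x)
    (hfin : (Icc 0 1 ∩ fixedPoints Φ).Finite) (h0 : Φ 0 = 0) (h1 : Φ 1 = 1) {x : ℝ}
    (hx : x ∈ Icc (0 : ℝ) 1) : ∃ p ∈ Icc 0 1 ∩ fixedPoints Φ,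
      infDist (Φ x) (Icc 0 1 ∩ fixedPoints Φ) ≤
        signedPrimitive φ Φ x - signedPrimitive φ Φ p := by
  rcases lt_trichotomy (Φ x) x with hlt | heq | hgt
  · exact exists_fixedPoint_ge_infDist_le hφ hΦ hfin h1 hx hlt
  · have hxF : x ∈ Icc 0 1 ∩ fixedPoints Φ := ⟨hx, heq⟩
    exact ⟨x, hxF, by rw [sub_self, heq, infDist_zero_of_mem hxF]⟩
  · exact exists_fixedPoint_le_infDist_le hφ hΦ hfin h0 hx hgt

lemma integral_signedPrimitive_mul (hφ : Continuous φ) (hΦ : ∀ x, HasDerivAt Φ (φ x) x)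
    (hfin : (Icc 0 1 ∩ fixedPoints Φ).Finite) (h1 : Φ 1 = 1) :
    ∫ x in (0 : ℝ)..1, signedPrimitive φ Φ x * φ x =
      -∫ t in (0 : ℝ)..1, Real.sign (Φ t - t) * (Φ t - 1) * φ t := by
  have hΦc : Continuous Φ := continuous_of_forall_hasDerivAt hΦ
  have hW := continuous_signedPrimitive hφ hΦc
  have hint := intervalIntegrable_sign_sub_mul hΦc (u := fun t => (Φ t - 1) * φ t) (by fun_prop) 0 1
  have hint' : IntervalIntegrable (fun x => signedPrimitive φ Φ x * φ x) volume 0 1 :=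
    (hW.mul hφ).intervalIntegrable _ _
  have hparts := integral_eq_of_hasDerivAt_off_countable
    (fun x => signedPrimitive φ Φ x * (Φ x - 1)) _ hfin.countable
    (by fun_prop : Continuous _).continuousOn (fun x hx => ?_) (hint.add hint')
  · rw [intervalIntegral.integral_add hint hint', h1, signedPrimitive, signedPrimitive,
      integral_same] at hparts
    simp only [mul_assoc]
    linarith
  · have hxF : Φ x ≠ x := fun h => hx.2 ⟨Ioo_subset_Icc_self (by simpa using hx.1), h⟩
    exact ((hasDerivAt_signedPrimitive hφ hΦc hxF).mul ((hΦ x).sub_const 1)).congr_deriv (by ring)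

theorem sInf_firstVariation_add_integral_infDist_nonpos (hφ : Continuous φ)
    (hΦ : ∀ x, HasDerivAt Φ (φ x) x) (hφ0 : ∀ t ∈ Icc (0 : ℝ) 1, 0 ≤ φ t) (h0 : Φ 0 = 0)
    (h1 : Φ 1 = 1) (hfin : (Icc 0 1 ∩ fixedPoints Φ).Finite) :
    sInf (firstVariation φ Φ '' Icc 0 1) +
      ∫ u in (0 : ℝ)..1, infDist u (Icc 0 1 ∩ fixedPoints Φ) ≤ 0 := by
  set F := Icc 0 1 ∩ fixedPoints Φ
  set K := ∫ t in (0 : ℝ)..1, Real.sign (Φ t - t) * (Φ t - 1) * φ t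
  set m := sInf (firstVariation φ Φ '' Icc 0 1)
  have hΦc : Continuous Φ := continuous_of_forall_hasDerivAt hΦ
  have hW := continuous_signedPrimitive hφ hΦc
  have hbdd : BddBelow (firstVariation φ Φ '' Icc 0 1) := by
    refine isCompact_Icc.bddBelow_image (Continuous.continuousOn ?_)
    rw [funext (firstVariation_eq hφ hΦc)]
    fun_prop
  have key : ∀ x ∈ Icc (0 : ℝ) 1,
      (m + infDist (Φ x) F) * φ x ≤ (K + signedPrimitive φ Φ x) * φ x := by
    intro x hx
    obtain ⟨p, hpF, hp⟩ := exists_fixedPoint_infDist_le hφ hΦ hfin h0 h1 hx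
    have hm := csInf_le hbdd (mem_image_of_mem _ hpF.1)
    rw [firstVariation_eq hφ hΦc, hpF.2, sub_self, abs_zero, add_zero] at hm
    exact mul_le_mul_of_nonneg_right (by linarith) (hφ0 x hx)
  have hmass : ∫ x in (0 : ℝ)..1, φ x = 1 := by
    rw [integral_eq_sub_of_hasDerivAt (fun x _ => hΦ x) (hφ.intervalIntegrable 0 1), h0, h1,
      sub_zero]
  have hsubst := integral_comp_mul_deriv (a := 0) (b := 1) (fun x _ => hΦ x) hφ.continuousOn
    (continuous_infDist_pt F)
  rw [h0, h1] at hsubst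
  have hint {f : ℝ → ℝ} (hf : Continuous f) : IntervalIntegrable f volume 0 1 :=
    hf.intervalIntegrable 0 1
  calc m + ∫ u in (0 : ℝ)..1, infDist u F = ∫ x in (0 : ℝ)..1, (m + infDist (Φ x) F) * φ x := by
        simp_rw [add_mul]
        rw [intervalIntegral.integral_add (hint (by fun_prop)) (hint (by fun_prop)),
          intervalIntegral.integral_const_mul, hmass, mul_one, ← hsubst]
        rfl
    _ ≤ ∫ x in (0 : ℝ)..1, (K + signedPrimitive φ Φ x) * φ x :=
        integral_mono_on zero_le_one (hint (by fun_prop)) (hint (by fun_prop)) key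
    _ = 0 := by
        simp_rw [add_mul]
        rw [intervalIntegral.integral_add (hint (by fun_prop)) (hint (by fun_prop)),
          intervalIntegral.integral_const_mul, hmass, mul_one,
          integral_signedPrimitive_mul hφ hΦ hfin h1]
        ring

end

lemma firstVariation_congr {φ₁ φ₂ Φ₁ Φ₂ : ℝ → ℝ} (hφ : EqOn φ₁ φ₂ (Icc 0 1))
    (hΦ : EqOn Φ₁ Φ₂ (Icc 0 1)) : EqOn (firstVariation φ₁ Φ₁) (firstVariation φ₂ Φ₂) (Icc 0 1) := by
  intro x hx
  have hsub : EqOn (fun t => Real.sign (Φ₁ t - t) * Φ₁ t * φ₁ t)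
      (fun t => Real.sign (Φ₂ t - t) * Φ₂ t * φ₂ t) (Icc 0 1) := fun t ht => by
    simp only [hφ ht, hΦ ht]
  have hsub' : EqOn (fun t => Real.sign (Φ₁ t - t) * (Φ₁ t - 1) * φ₁ t)
      (fun t => Real.sign (Φ₂ t - t) * (Φ₂ t - 1) * φ₂ t) (Icc 0 1) := fun t ht => by
    simp only [hφ ht, hΦ ht]
  rw [firstVariation, firstVariation,
    integral_congr (hsub.mono (uIcc_subset_Icc (left_mem_Icc.2 zero_le_one) hx)),
    integral_congr (hsub'.mono (uIcc_subset_Icc hx (right_mem_Icc.2 zero_le_one))), hΦ hx]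

/-- if the equation `Φ(x) = x` has exactly `S` solutions in `[0,1]`, then
`min_{0≤x≤1} D(x) ≤ −1/(4S)`. -/
theorem stmt_15 (φ Φ : ℝ → ℝ) (c C : ℝ) (hc : 0 < c)
    (hφcont : ContinuousOn φ (Set.Icc 0 1))
    (hφ : ∀ t ∈ Set.Icc (0 : ℝ) 1, c ≤ φ t ∧ φ t ≤ C)
    (hint : (∫ t in (0 : ℝ)..1, φ t) = 1)
    (hΦ : ∀ x ∈ Set.Icc (0 : ℝ) 1, Φ x = ∫ t in (0 : ℝ)..x, φ t)
    (hfin : {x ∈ Set.Icc (0 : ℝ) 1 | Φ x = x}.Finite)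
    (D : ℝ → ℝ)
    (hD : ∀ x, D x = (∫ t in (0 : ℝ)..x, Real.sign (Φ t - t) * Φ t * φ t) +
      (∫ t in x..(1 : ℝ), Real.sign (Φ t - t) * (Φ t - 1) * φ t) + |x - Φ x|)
    (S : ℕ) (hS : {x ∈ Set.Icc (0 : ℝ) 1 | Φ x = x}.ncard = S) :
    sInf (D '' Set.Icc (0 : ℝ) 1) ≤ -(1 / (4 * (S : ℝ))) := by
  have h0 : (0 : ℝ) ∈ Icc 0 1 := left_mem_Icc.2 zero_le_one
  have h1 : (1 : ℝ) ∈ Icc 0 1 := right_mem_Icc.2 zero_le_one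
  set ψ := IccExtend zero_le_one ((Icc 0 1).domRestrict φ)
  set Ψ := fun x => ∫ t in (0 : ℝ)..x, ψ t
  have hψ : Continuous ψ := hφcont.domRestrict.Icc_extend'
  have hφψ : EqOn φ ψ (Icc 0 1) := fun x hx =>
    (IccExtend_of_mem zero_le_one ((Icc 0 1).domRestrict φ) hx).symm
  have hΦΨ : EqOn Φ Ψ (Icc 0 1) := fun x hx =>
    (hΦ x hx).trans (integral_congr (hφψ.mono (uIcc_subset_Icc h0 hx)))
  have hF : Icc 0 1 ∩ fixedPoints Ψ = {x ∈ Icc (0 : ℝ) 1 | Φ x = x} :=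
    Set.ext fun x => and_congr_right fun hx => by rw [mem_fixedPoints, IsFixedPt, hΦΨ hx]
  have hcore := sInf_firstVariation_add_integral_infDist_nonpos hψ
    (fun x => (hψ.integral_hasStrictDerivAt 0 x).hasDerivAt)
    (fun t ht => hφψ ht ▸ hc.le.trans (hφ t ht).1) integral_same
    ((hΦΨ h1).symm.trans ((hΦ 1 h1).trans hint)) (hF ▸ hfin)
  rw [hF, ← EqOn.image_eq fun x hx => (hD x).trans (firstVariation_congr hφψ hΦΨ hx)] at hcore
  have hdist := one_div_four_mul_ncard_le_integral_infDist hfin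
    ⟨0, h0, (hΦ 0 h0).trans integral_same⟩
  rw [hS] at hdist
  linarith
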